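/- Fix positive integers n ≤ T and q ∈ [0,1) with q = 1−p. Among all assignments of repetition counts ε₁,…,ε_n ≥ 1 with Σ ε_i = T, the product ∏_{i=1}^n (1 − q^{ε_i}) is maximized by the balanced assignment in which every ε_i ∈ {⌊T/n⌋, ⌈T/n⌉}. -/

import Mathlib

open Finset

lemma swap_ineq (q : ℝ) (h0 : 0 ≤ q) (h1 : q < 1) (b c : ℕ) (hbc : b ≤ c) :
    (1 - q ^ (c + 1)) * (1 - q ^ b) ≤ (1 - q ^ c) * (1 - q ^ (b + 1)) := by
  have hpow : q ^ c ≤ q ^ b := pow_le_pow_of_le_one h0 h1.le hbc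
  have key : (0 : ℝ) ≤ (1 - q) * (q ^ b - q ^ c) :=
    mul_nonneg (by linarith) (by linarith)
  rw [pow_succ, pow_succ]
  nlinarith [key]

lemma fact_nonneg (q : ℝ) (h0 : 0 ≤ q) (h1 : q < 1) (k : ℕ) : (0:ℝ) ≤ 1 - q ^ k := by
  have := pow_le_one₀ h0 h1.le (n := k)
  linarith

lemma sum_count (n m : ℕ) (ε : Fin n → ℕ) (hb : ∀ i, ε i = m ∨ ε i = m + 1) :
    ∑ i, ε i = n * m + (univ.filter (fun i => ε i = m + 1)).card := by
  have h : ∀ i, ε i = m + (if ε i = m + 1 then 1 else 0) := by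
    intro i; rcases hb i with h | h <;> simp [h]
  calc ∑ i, ε i = ∑ i, (m + (if ε i = m + 1 then 1 else 0)) := by
        exact Finset.sum_congr rfl (fun i _ => h i)
    _ = n * m + (univ.filter (fun i => ε i = m + 1)).card := by
        rw [Finset.sum_add_distrib, Finset.sum_const, Finset.card_fin,
          Finset.card_filter]
        simp [mul_comm]

lemma bal_prod (n : ℕ) (q : ℝ) (m r : ℕ) (ε : Fin n → ℕ)
    (hb : ∀ i, ε i = m ∨ ε i = m + 1)
    (hr : (univ.filter (fun i => ε i = m + 1)).card = r) :
    ∏ i, (1 - q ^ ε i) = (1 - q ^ m) ^ (n - r) * (1 - q ^ (m + 1)) ^ r := by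
  rw [← Finset.prod_filter_mul_prod_filter_not univ (fun i => ε i = m + 1)]
  have h1 : ∏ i ∈ univ.filter (fun i => ε i = m + 1), (1 - q ^ ε i)
      = (1 - q ^ (m + 1)) ^ r := by
    rw [Finset.prod_congr rfl (fun i hi => by
      simp only [Finset.mem_filter] at hi; rw [hi.2]), Finset.prod_const, hr]
  have h2 : ∏ i ∈ univ.filter (fun i => ¬(ε i = m + 1)), (1 - q ^ ε i)
      = (1 - q ^ m) ^ (n - r) := by
    rw [Finset.prod_congr rfl (fun i hi => by
      simp only [Finset.mem_filter] at hi
      rcases hb i with h | h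
      · rw [h]
      · exact absurd h hi.2), Finset.prod_const]
    congr 1
    have := Finset.card_filter_add_card_filter_not
      (s := (univ : Finset (Fin n))) (p := fun i => ε i = m + 1)
    rw [Finset.card_fin] at this
    omega
  rw [h1, h2, mul_comm]

lemma main_ind (n T : ℕ) (hn : 0 < n) (q : ℝ) (h0 : 0 ≤ q) (h1 : q < 1) :
    ∀ N (ε : Fin n → ℕ), (∑ i, (ε i) ^ 2) = N → ∑ i, ε i = T →
    ∏ i, (1 - q ^ ε i) ≤
      (1 - q ^ (T / n)) ^ (n - T % n) * (1 - q ^ (T / n + 1)) ^ (T % n) := by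
  intro N
  induction N using Nat.strong_induction_on with
  | _ N ih =>
    intro ε hN hsum
    by_cases hb : ∀ i j, ε i ≤ ε j + 1
    · -- balanced case
      obtain ⟨j0, -, hj0⟩ := Finset.exists_min_image univ ε ⟨⟨0, hn⟩, mem_univ _⟩
      set a := ε j0 with ha
      have hvals : ∀ i, ε i = a ∨ ε i = a + 1 := by
        intro i
        have h1' := hj0 i (mem_univ i)
        have h2' := hb i j0
        omega
      set k := (univ.filter (fun i => ε i = a + 1)).card with hk
      have hsc := sum_count n a ε hvals
      have hkn : k < n := by
        have hsub : univ.filter (fun i => ε i = a + 1) ⊆ univ.erase j0 := by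
          intro i hi
          simp only [Finset.mem_filter] at hi
          refine Finset.mem_erase.2 ⟨?_, mem_univ _⟩
          intro hij; rw [hij] at hi; omega
        have := Finset.card_le_card hsub
        rw [Finset.card_erase_of_mem (mem_univ j0), Finset.card_fin] at this
        omega
      have hT : T = n * a + k := by rw [← hsum, hsc]
      have hdiv : T / n = a := by
        rw [hT, Nat.add_comm, Nat.add_mul_div_left _ _ hn, Nat.div_eq_of_lt hkn]
        omega
      have hmod : T % n = k := by
        rw [hT, Nat.add_comm, Nat.add_mul_mod_self_left, Nat.mod_eq_of_lt hkn]
      rw [hdiv, hmod]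
      exact le_of_eq (bal_prod n q a k ε hvals rfl)
    · -- swap step
      push_neg at hb
      obtain ⟨i, j, hij⟩ := hb
      have hij2 : ε j + 2 ≤ ε i := hij
      have hne : i ≠ j := by intro h; rw [h] at hij2; omega
      set ε' := Function.update (Function.update ε i (ε i - 1)) j (ε j + 1) with hε'
      have hEi : ε' i = ε i - 1 := by
        rw [hε', Function.update_of_ne hne, Function.update_self]
      have hEj : ε' j = ε j + 1 := by rw [hε', Function.update_self]
      have hEk : ∀ x, x ≠ i → x ≠ j → ε' x = ε x := by
        intro x hxi hxj
        rw [hε', Function.update_of_ne hxj, Function.update_of_ne hxi]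
      have hdecomp : ∀ (g : Fin n → ℕ), ∑ x, g x =
          g j + (g i + ∑ x ∈ (univ.erase j).erase i, g x) := by
        intro g
        rw [← Finset.add_sum_erase _ g (mem_univ j),
          ← Finset.add_sum_erase _ g (Finset.mem_erase.2 ⟨hne, mem_univ i⟩)]
      have hrest_eq : ∀ x ∈ (univ.erase j).erase i, ε' x = ε x := by
        intro x hx
        simp only [Finset.mem_erase] at hx
        exact hEk x hx.1 hx.2.1
      have hre : ∑ x ∈ (univ.erase j).erase i, ε' x
          = ∑ x ∈ (univ.erase j).erase i, ε x :=
        Finset.sum_congr rfl hrest_eq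
      have hre2 : ∑ x ∈ (univ.erase j).erase i, (ε' x) ^ 2
          = ∑ x ∈ (univ.erase j).erase i, (ε x) ^ 2 :=
        Finset.sum_congr rfl (fun x hx => by rw [hrest_eq x hx])
      have h1s := hdecomp ε'
      have h2s := hdecomp ε
      rw [hEi, hEj] at h1s
      have hsum' : ∑ x, ε' x = T := by omega
      have h1q := hdecomp (fun x => (ε' x) ^ 2)
      have h2q := hdecomp (fun x => (ε x) ^ 2)
      rw [hEi, hEj] at h1q
      have hgt : (ε j + 1) ^ 2 + (ε i - 1) ^ 2 < ε j ^ 2 + ε i ^ 2 := by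
        obtain ⟨d, hd⟩ : ∃ d, ε i = ε j + 2 + d := ⟨ε i - ε j - 2, by omega⟩
        have hd1 : ε i - 1 = ε j + 1 + d := by omega
        rw [hd1, hd]
        nlinarith
      have hsq : ∑ x, (ε' x) ^ 2 < N := by omega
      -- product comparison
      have hprod : ∏ x, (1 - q ^ ε x) ≤ ∏ x, (1 - q ^ ε' x) := by
        have pd : ∀ (g : Fin n → ℕ), ∏ x, (1 - q ^ g x) =
            (1 - q ^ g j) * ((1 - q ^ g i) *
              ∏ x ∈ (univ.erase j).erase i, (1 - q ^ g x)) := by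
          intro g
          rw [← Finset.mul_prod_erase _ _ (mem_univ j),
            ← Finset.mul_prod_erase _ _ (Finset.mem_erase.2 ⟨hne, mem_univ i⟩)]
        have hreP : ∏ x ∈ (univ.erase j).erase i, (1 - q ^ ε' x)
            = ∏ x ∈ (univ.erase j).erase i, (1 - q ^ ε x) :=
          Finset.prod_congr rfl (fun x hx => by rw [hrest_eq x hx])
        rw [pd ε, pd ε', hreP]
        have hR : (0:ℝ) ≤ ∏ x ∈ (univ.erase j).erase i, (1 - q ^ ε x) :=
          Finset.prod_nonneg (fun x _ => fact_nonneg q h0 h1 _)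
        have hkey : (1 - q ^ ε i) * (1 - q ^ ε j) ≤
            (1 - q ^ ε' i) * (1 - q ^ ε' j) := by
          rw [hEi, hEj]
          have hc : ε i = (ε i - 1) + 1 := by omega
          calc (1 - q ^ ε i) * (1 - q ^ ε j)
              = (1 - q ^ ((ε i - 1) + 1)) * (1 - q ^ ε j) := by rw [← hc]
            _ ≤ (1 - q ^ (ε i - 1)) * (1 - q ^ (ε j + 1)) :=
                swap_ineq q h0 h1 (ε j) (ε i - 1) (by omega)
        calc (1 - q ^ ε j) * ((1 - q ^ ε i) *
              ∏ x ∈ (univ.erase j).erase i, (1 - q ^ ε x))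
            = ((1 - q ^ ε i) * (1 - q ^ ε j)) *
              ∏ x ∈ (univ.erase j).erase i, (1 - q ^ ε x) := by ring
          _ ≤ ((1 - q ^ ε' i) * (1 - q ^ ε' j)) *
              ∏ x ∈ (univ.erase j).erase i, (1 - q ^ ε x) :=
                mul_le_mul_of_nonneg_right hkey hR
          _ = (1 - q ^ ε' j) * ((1 - q ^ ε' i) *
              ∏ x ∈ (univ.erase j).erase i, (1 - q ^ ε x)) := by ring
      exact le_trans hprod (ih _ hsq ε' rfl hsum')

/-- Balanced repetition is optimal: among all repetition assignments
    ε₁,…,ε_n ≥ 1 with Σ ε_i = T, the product ∏ (1 − q^(ε i)) is maximized by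
    any balanced assignment with every εb i ∈ {⌊T/n⌋, ⌈T/n⌉}. -/
theorem stmt13 (n T : ℕ) (hn : 0 < n) (hnT : n ≤ T)
    (q : ℝ) (hq : q ∈ Set.Ico (0 : ℝ) 1)
    (ε εb : Fin n → ℕ)
    (hε : ∀ i, 1 ≤ ε i) (hsum : ∑ i, ε i = T)
    (hbal : ∀ i, εb i = T / n ∨ εb i = T / n + 1) (hbsum : ∑ i, εb i = T) :
    ∏ i, (1 - q ^ ε i) ≤ ∏ i, (1 - q ^ εb i) := by
  obtain ⟨h0, h1⟩ := hq
  have hsc := sum_count n (T / n) εb hbal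
  have hdm := Nat.div_add_mod T n
  have hcard : (univ.filter (fun i => εb i = T / n + 1)).card = T % n := by omega
  have hb := bal_prod n q (T / n) (T % n) εb hbal hcard
  rw [hb]
  exact main_ind n T hn q h0 h1 _ ε rfl hsum
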